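/- arXiv:1703.01710 — 3 statements merged into one kernel-verified Lean document; each statement's English description precedes it below -/
import Mathlib

section
/- If ‖μ‖ = N, then the class function binom(X,μ) on S_N is the indicator function of the conjugacy class C_μ consisting of permutations with exactly μ_k many k-cycles for every k. -/
/-- `cycleCount σ k` is the number of `k`-cycles in the cycle decomposition of `σ`
(with `1`-cycles interpreted as fixed points). -/
def cycleCount {α : Type*} [Fintype α] [DecidableEq α] (σ : Equiv.Perm α) (k : ℕ) : ℕ :=
  if k = 1 then (Finset.univ.filter fun x => σ x = x).card else Multiset.count k σ.cycleType

/-! If `σ ∈ C_μ` every factor is `choose (μ k) (μ k) = 1`. Conversely, a nonzero product forces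
`μ k ≤ X_k(σ)` for all `k`; since the cycle counts of any `σ ∈ S_N` have total weight
`∑ k * X_k(σ) = N = ‖μ‖`, these inequalities must all be equalities. -/

open Finset

lemma eq_of_le_of_sum_mul_eq {s : Finset ℕ} {f g : ℕ → ℕ} (hle : ∀ k ∈ s, f k ≤ g k)
    (hsum : ∑ k ∈ s, k * f k = ∑ k ∈ s, k * g k) {k : ℕ} (hk : k ∈ s) (hk0 : k ≠ 0) :
    f k = g k :=
  Nat.eq_of_mul_eq_mul_left (Nat.pos_of_ne_zero hk0)
    ((sum_eq_sum_iff_of_le fun i hi => Nat.mul_le_mul_left i (hle i hi)).mp hsum k hk)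

namespace Equiv.Perm

variable {α : Type*} [Fintype α] [DecidableEq α]

lemma card_filter_apply_eq_self (σ : Perm α) :
    #(univ.filter fun x => σ x = x) = Fintype.card α - σ.cycleType.sum := by
  rw [← σ.card_fixedPoints, ← Fintype.card_subtype]
  rfl

lemma one_notMem_cycleType (σ : Perm α) : 1 ∉ σ.cycleType := fun h =>
  absurd (two_le_of_mem_cycleType h) (by norm_num)

lemma cycleCount_eq_zero_of_notMem (σ : Perm α) {k : ℕ}
    (hk : k ∉ insert 1 σ.cycleType.toFinset) : cycleCount σ k = 0 := by
  rw [mem_insert, Multiset.mem_toFinset, not_or] at hk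
  rw [cycleCount, if_neg hk.1, Multiset.count_eq_zero_of_notMem hk.2]

lemma sum_mul_cycleCount_of_subset (σ : Perm α) {s : Finset ℕ}
    (hs : insert 1 σ.cycleType.toFinset ⊆ s) :
    ∑ k ∈ s, k * cycleCount σ k = Fintype.card α := by
  rw [← sum_subset hs fun k _ hk => by rw [σ.cycleCount_eq_zero_of_notMem hk, mul_zero],
    sum_insert (by simpa using σ.one_notMem_cycleType)]
  have hcycles : ∑ k ∈ σ.cycleType.toFinset, k * cycleCount σ k = σ.cycleType.sum := by
    rw [sum_multiset_count]
    refine sum_congr rfl fun k hk => ?_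
    have hk1 : k ≠ 1 := fun h => σ.one_notMem_cycleType (h ▸ Multiset.mem_toFinset.mp hk)
    rw [cycleCount, if_neg hk1, smul_eq_mul, mul_comm]
  rw [hcycles, cycleCount, if_pos rfl, one_mul, card_filter_apply_eq_self]
  exact Nat.sub_add_cancel σ.sum_cycleType_le

lemma cycleCount_eq_of_le (σ : Perm α) {μ : ℕ →₀ ℕ}
    (hμ : (μ.sum fun k m => k * m) = Fintype.card α)
    (hle : ∀ k ∈ μ.support, μ k ≤ cycleCount σ k) {k : ℕ} (hk : k ≠ 0) :
    cycleCount σ k = μ k := by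
  set s := insert 1 (μ.support ∪ σ.cycleType.toFinset)
  have hcycles : insert 1 σ.cycleType.toFinset ⊆ s :=
    insert_subset_insert 1 subset_union_right
  by_cases hks : k ∈ s
  · refine (eq_of_le_of_sum_mul_eq (fun i _ => ?_) ?_ hks hk).symm
    · by_cases hi : i ∈ μ.support
      · exact hle i hi
      · simp [Finsupp.notMem_support_iff.mp hi]
    · rw [σ.sum_mul_cycleCount_of_subset hcycles, ← hμ,
        Finsupp.sum_of_support_subset μ (subset_union_left.trans (subset_insert 1 _)) _
          fun _ _ => mul_zero _]
  · rw [σ.cycleCount_eq_zero_of_notMem fun h => hks (hcycles h),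
      Finsupp.notMem_support_iff.mp fun h => hks (subset_insert 1 _ (mem_union_left _ h))]

end Equiv.Perm

open scoped Classical in
/-- If `‖μ‖ = N`, then `binom(X,μ)` is the indicator function of the conjugacy class `C_μ`
of permutations with exactly `μ k` many `k`-cycles for every `k ≥ 1`. -/
theorem stmt1 (N : ℕ) (μ : ℕ →₀ ℕ) (h0 : μ 0 = 0)
    (hμ : (μ.sum fun k m => k * m) = N) (σ : Equiv.Perm (Fin N)) :
    (∏ k ∈ μ.support, (cycleCount σ k).choose (μ k))
      = if (∀ k, 1 ≤ k → cycleCount σ k = μ k) then 1 else 0 := by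
  split_ifs with hσ
  · refine prod_eq_one fun k hk => ?_
    have hk0 : k ≠ 0 := by rintro rfl; exact Finsupp.mem_support_iff.mp hk h0
    rw [hσ k (Nat.one_le_iff_ne_zero.mpr hk0), Nat.choose_self]
  · by_contra hne
    have hle : ∀ k ∈ μ.support, μ k ≤ cycleCount σ k := fun k hk =>
      not_lt.mp (Nat.choose_eq_zero_iff.not.mp (prod_ne_zero_iff.mp hne k hk))
    exact hσ fun k hk => σ.cycleCount_eq_of_le (by rw [hμ, Fintype.card_fin]) hle
      (Nat.one_le_iff_ne_zero.mp hk)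
end

section
/- With H = (S_{r_1})^{d_1} × … × (S_{r_n})^{d_n} acting on the set T = {(i,j,k) : 1 ≤ i ≤ n, 1 ≤ j ≤ r_i, k ∈ Z/d_iZ} by (h_{i,k})·(i,j,k) = (i, h_{i,k}(j), k), and with τ the permutation τ(i,j,k) = (i,j,k+1): for every r ≥ 1 and every h ∈ H, the number of r-cycles of the permutation τ∘h on T equals Σ_{i : d_i | r} X_{r/d_i}(m_i(h)), where X_ℓ counts ℓ-cycles and m_i(h) = h_{i,d_i} · … · h_{i,1} ∈ S_{r_i}. -/
/-- The permutation of the grid `{1,…,r} × Z/dZ` acting by `h k` on the fiber over `k`. -/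
def gridPerm (r d : ℕ) (h : Fin d → Equiv.Perm (Fin r)) : Equiv.Perm (Fin r × Fin d) where
  toFun p := (h p.2 p.1, p.2)
  invFun p := ((h p.2).symm p.1, p.2)
  left_inv p := by simp
  right_inv p := by simp

/-- The cyclic shift `τ(j,k) = (j,k+1)` of the grid. -/
def tauGrid (r d : ℕ) : Equiv.Perm (Fin r × Fin d) :=
  (Equiv.refl (Fin r)).prodCongr (finRotate d)

/-- The descending product `m_i(h) = h_{i,d_i} ⋯ h_{i,1} ∈ S_{r_i}` (applying `h_{i,0}` first). -/
def mComp {r d : ℕ} (h : Fin d → Equiv.Perm (Fin r)) : Equiv.Perm (Fin r) :=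
  ((List.ofFn h).reverse).prod

/-- The Young-type group `H = ∏ᵢ (S_{rᵢ})^{dᵢ}`. -/
abbrev BigH (n : ℕ) (r d : Fin n → ℕ) := ∀ i : Fin n, Fin (d i) → Equiv.Perm (Fin (r i))

/-- The action of `h ∈ H` on `T = ⨿ᵢ Fin(rᵢ) × Z/dᵢZ`, permuting `j`-coordinates. -/
def hPermBig {n : ℕ} {r d : Fin n → ℕ} (h : BigH n r d) :
    Equiv.Perm (Σ i : Fin n, Fin (r i) × Fin (d i)) :=
  Equiv.sigmaCongrRight fun i => gridPerm (r i) (d i) (h i)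

/-- The permutation `τ(i,j,k) = (i,j,k+1)` of `T`. -/
def tauBig (n : ℕ) (r d : Fin n → ℕ) : Equiv.Perm (Σ i : Fin n, Fin (r i) × Fin (d i)) :=
  Equiv.sigmaCongrRight fun i => tauGrid (r i) (d i)

/-!
Count points instead of cycles: the `ℓ`-cycles of a permutation cover exactly its points of
minimal period `ℓ`, so it suffices to count points of period `R` of `τ ∘ h`, and minimal periods
on `T` are computed on each grid `Fin r × Fin d` separately. There `τ ∘ h` moves the
`Z/dZ`-coordinate one step forward, so every period is a multiple of `d`, and the `d`-th iterate
preserves each fibre `Fin r × {k}`, on which it is conjugate to `m(h)` by the partial product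
`h_{k-1} ⋯ h_0`. Hence `(j, k)` has period `d` times the period of `j` under `m(h)`, and the grid
has `d · ℓ · X_ℓ(m(h))` points of period `R = d ℓ`.
-/

open Function Finset Equiv Fin.NatCast

namespace Function

variable {α β : Type*}

theorem minimalPeriod_eq_of_isPeriodicPt_iff {f : α → α} {x : α} {k : ℕ}
    (h : ∀ n, IsPeriodicPt f n x ↔ k ∣ n) : minimalPeriod f x = k :=
  Nat.dvd_antisymm ((h k).2 dvd_rfl).minimalPeriod_dvd ((h _).1 (isPeriodicPt_minimalPeriod f x))

theorem Semiconj.minimalPeriod_apply_eq {g : α → β} {fa : α → α} {fb : β → β}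
    (h : Semiconj g fa fb) (hg : Injective g) (x : α) :
    minimalPeriod fb (g x) = minimalPeriod fa x :=
  minimalPeriod_eq_minimalPeriod_iff.2 fun n => by
    simp only [IsPeriodicPt, IsFixedPt, ← (h.iterate_right n).eq, hg.eq_iff]

theorem minimalPeriod_eq_mul_minimalPeriod_iterate {D : ℕ} [NeZero D] {f : α → α}
    (π : α → Fin D) (hπ : ∀ x, π (f x) = π x + 1) (x : α) :
    minimalPeriod f x = D * minimalPeriod f^[D] x := by
  have hπ_iterate (n : ℕ) : π (f^[n] x) = π x + (n : Fin D) := by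
    induction n with
    | zero => simp
    | succ n ih => rw [iterate_succ_apply', hπ, ih, Nat.cast_succ, add_assoc]
  have hdvd : D ∣ minimalPeriod f x := by
    have := hπ_iterate (minimalPeriod f x)
    rwa [iterate_minimalPeriod, left_eq_add, Fin.natCast_eq_zero] at this
  rw [minimalPeriod_iterate_eq_div_gcd (NeZero.ne D), Nat.gcd_eq_right hdvd,
    Nat.mul_div_cancel' hdvd]

end Function

namespace Equiv.Perm

variable {α : Type*} [Fintype α] [DecidableEq α]

theorem minimalPeriod_eq_card_support_cycleOf (σ : Perm α) {x : α} (hx : σ x ≠ x) :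
    minimalPeriod σ x = #(σ.cycleOf x).support := by
  have hx_mem : x ∈ (σ.cycleOf x).support :=
    mem_support_cycleOf_iff.2 ⟨SameCycle.refl _ _, mem_support.2 hx⟩
  refine minimalPeriod_eq_of_isPeriodicPt_iff fun n => ?_
  rw [IsPeriodicPt, IsFixedPt, iterate_eq_pow]
  exact (σ.isCycleOn_support_cycleOf x).pow_apply_eq hx_mem

theorem mem_support_iff_cycleOf_eq {σ c : Perm α} (hc : c ∈ σ.cycleFactorsFinset) {x : α} :
    x ∈ c.support ↔ σ.cycleOf x = c := by
  refine ⟨fun hx => (cycle_is_cycleOf hx hc).symm, fun hx => ?_⟩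
  have hxσ : x ∈ σ.support := cycleOf_mem_cycleFactorsFinset_iff.1 (hx ▸ hc)
  exact hx ▸ mem_support_cycleOf_iff.2 ⟨SameCycle.refl _ _, hxσ⟩

theorem minimalPeriod_eq_card_support_of_mem_cycleFactorsFinset {σ c : Perm α}
    (hc : c ∈ σ.cycleFactorsFinset) {x : α} (hx : x ∈ c.support) :
    minimalPeriod σ x = #c.support := by
  rw [cycle_is_cycleOf hx hc, minimalPeriod_eq_card_support_cycleOf]
  exact mem_support.1 (mem_cycleFactorsFinset_support_le hc hx)

theorem count_cycleType_eq_card_filter (σ : Perm α) (k : ℕ) :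
    σ.cycleType.count k = #{c ∈ σ.cycleFactorsFinset | #c.support = k} := by
  rw [cycleType_def, Multiset.count_map, Finset.card, filter_val]
  simp only [comp_apply, eq_comm]

end Equiv.Perm

noncomputable def periodCount {α : Type*} [Fintype α] (σ : Perm α) (k : ℕ) : ℕ :=
  #{x | minimalPeriod σ x = k}

theorem periodCount_eq_mul_cycleCount {α : Type*} [Fintype α] [DecidableEq α] (σ : Perm α)
    {k : ℕ} (hk : 1 ≤ k) : periodCount σ k = k * cycleCount σ k := by
  rcases eq_or_ne k 1 with rfl | hk1
  · simp [periodCount, cycleCount, minimalPeriod_eq_one_iff_isFixedPt, IsFixedPt]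
  set S : Finset α := {x | minimalPeriod σ x = k}
  set C : Finset (Perm α) := {c ∈ σ.cycleFactorsFinset | #c.support = k}
  have hmaps : Set.MapsTo σ.cycleOf S C := by
    intro x hx
    have hσx : σ x ≠ x := fun hfix =>
      hk1 ((mem_filter.1 hx).2 ▸ minimalPeriod_eq_one_iff_isFixedPt.2 hfix)
    simp only [S, C, coe_filter, mem_univ, true_and, Set.mem_ofPred_eq] at hx ⊢
    exact ⟨Perm.cycleOf_mem_cycleFactorsFinset_iff.2 (Perm.mem_support.2 hσx),
      hx ▸ (σ.minimalPeriod_eq_card_support_cycleOf hσx).symm⟩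
  have hfiber : ∀ c ∈ C, #{x ∈ S | σ.cycleOf x = c} = k := by
    intro c hc
    obtain ⟨hcσ, rfl⟩ := mem_filter.1 hc
    congr 1
    ext x
    simp only [S, mem_filter, mem_univ, true_and, ← Perm.mem_support_iff_cycleOf_eq hcσ]
    exact ⟨And.right, fun hx =>
      ⟨Perm.minimalPeriod_eq_card_support_of_mem_cycleFactorsFinset hcσ hx, hx⟩⟩
  rw [periodCount, card_eq_sum_card_fiberwise hmaps, sum_congr rfl hfiber, sum_const,
    smul_eq_mul, cycleCount, if_neg hk1, Perm.count_cycleType_eq_card_filter, mul_comm]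

theorem periodCount_sigmaCongrRight {ι : Type*} [Fintype ι] {β : ι → Type*}
    [∀ i, Fintype (β i)] (F : ∀ i, Perm (β i)) (k : ℕ) :
    periodCount (sigmaCongrRight F) k = ∑ i, periodCount (F i) k := by
  have hperiod (i : ι) (p : β i) :
      minimalPeriod (sigmaCongrRight F) ⟨i, p⟩ = minimalPeriod (F i) p :=
    Semiconj.minimalPeriod_apply_eq (g := Sigma.mk i) (fun _ => rfl) sigma_mk_injective p
  simp only [periodCount]
  rw [← card_sigma]
  congr 1
  ext ⟨i, p⟩
  simp [hperiod]

section Grid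

variable {r D : ℕ} [NeZero D] (h : Fin D → Perm (Fin r))

def partialProd : ℕ → Perm (Fin r)
  | 0 => 1
  | N + 1 => h N * partialProd N

theorem partialProd_eq_prod_range (N : ℕ) :
    partialProd h N = ((List.range N).map fun i : ℕ => h (i : Fin D)).reverse.prod := by
  induction N with
  | zero => rfl
  | succ N ih => simp [partialProd, ih, List.range_succ]

theorem partialProd_self : partialProd h D = mComp h := by
  rw [partialProd_eq_prod_range, mComp]
  congr 2
  refine List.ext_getElem (by simp) fun i hi _ => ?_
  simp only [List.length_map, List.length_range] at hi
  simp [Fin.natCast_eq_mk hi]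

theorem partialProd_add_self (N : ℕ) : partialProd h (N + D) = partialProd h N * mComp h := by
  induction N with
  | zero => rw [zero_add, partialProd_self, partialProd, one_mul]
  | succ N ih =>
    rw [add_right_comm, partialProd, ih, partialProd, Nat.cast_add, Fin.natCast_self, add_zero,
      mul_assoc]

theorem tauGrid_mul_gridPerm_apply (p : Fin r × Fin D) :
    (tauGrid r D * gridPerm r D h) p = (h p.2 p.1, p.2 + 1) := by
  simp [tauGrid, gridPerm, finRotate_apply]

theorem iterate_tauGrid_mul_gridPerm_partialProd (N t : ℕ) (j : Fin r) :
    (⇑(tauGrid r D * gridPerm r D h))^[t] (partialProd h N j, (N : Fin D))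
      = (partialProd h (N + t) j, ((N + t : ℕ) : Fin D)) := by
  induction t with
  | zero => rfl
  | succ t ih =>
    rw [iterate_succ_apply', ih, tauGrid_mul_gridPerm_apply, ← add_assoc, partialProd,
      Nat.cast_succ]
    rfl

theorem semiconj_iterate_tauGrid_mul_gridPerm :
    Semiconj (gridPerm r D fun k => partialProd h k) (Prod.map (mComp h) id)
      (⇑(tauGrid r D * gridPerm r D h))^[D] := by
  rintro ⟨j, k⟩
  have := iterate_tauGrid_mul_gridPerm_partialProd h k D j
  rw [Fin.cast_val_eq_self, partialProd_add_self, Nat.cast_add, Fin.natCast_self, add_zero,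
    Fin.cast_val_eq_self] at this
  exact this.symm

theorem minimalPeriod_tauGrid_mul_gridPerm (p : Fin r × Fin D) :
    minimalPeriod (tauGrid r D * gridPerm r D h) (gridPerm r D (fun k => partialProd h k) p)
      = D * minimalPeriod (mComp h) p.1 := by
  rw [minimalPeriod_eq_mul_minimalPeriod_iterate Prod.snd
      (fun _ => by rw [tauGrid_mul_gridPerm_apply]),
    (semiconj_iterate_tauGrid_mul_gridPerm h).minimalPeriod_apply_eq
      (Equiv.injective _),
    minimalPeriod_prodMap, minimalPeriod_id, Nat.lcm_one_right]

end Grid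

theorem periodCount_tauGrid_mul_gridPerm {r D : ℕ} (h : Fin D → Perm (Fin r)) (k : ℕ) :
    periodCount (tauGrid r D * gridPerm r D h) k
      = if D ∣ k then D * periodCount (mComp h) (k / D) else 0 := by
  rcases eq_zero_or_neZero D with rfl | hD
  · simp [periodCount]
  have hcard : periodCount (tauGrid r D * gridPerm r D h) k
      = D * #{j | D * minimalPeriod (mComp h) j = k} := by
    have hmem (p : Fin r × Fin D) : p ∈ ({p | D * minimalPeriod (mComp h) p.1 = k} : Finset _) ↔
        gridPerm r D (fun k => partialProd h k) p ∈
          ({x | minimalPeriod (tauGrid r D * gridPerm r D h) x = k} : Finset _) := by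
      simp only [mem_filter, mem_univ, true_and, minimalPeriod_tauGrid_mul_gridPerm]
    rw [periodCount, ← card_equiv _ hmem, ← univ_product_univ,
      filter_product_left (fun j => D * minimalPeriod (mComp h) j = k),
      card_product, card_univ, Fintype.card_fin, mul_comm]
  rw [hcard]
  split_ifs with hdvd
  · obtain ⟨c, rfl⟩ := hdvd
    simp [periodCount, Nat.mul_div_cancel_left c (NeZero.pos D), NeZero.ne D]
  · rw [filter_false_of_mem fun j _ hj => hdvd ⟨_, hj.symm⟩, card_empty, mul_zero]

/-- The number of `R`-cycles of `τ∘h` on `T` equals `∑_{i : dᵢ ∣ R} X_{R/dᵢ}(mᵢ(h))`. -/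
theorem stmt6 (n : ℕ) (r d : Fin n → ℕ) (h : BigH n r d) (R : ℕ) (hR : 1 ≤ R) :
    cycleCount (tauBig n r d * hPermBig h) R
      = ∑ i ∈ Finset.univ.filter (fun i => d i ∣ R), cycleCount (mComp (h i)) (R / d i) := by
  have hsigma : tauBig n r d * hPermBig h
      = sigmaCongrRight fun i => tauGrid (r i) (d i) * gridPerm (r i) (d i) (h i) :=
    Equiv.ext fun _ => rfl
  refine Nat.eq_of_mul_eq_mul_left hR ?_
  rw [← periodCount_eq_mul_cycleCount _ hR, hsigma, periodCount_sigmaCongrRight, mul_sum,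
    sum_filter]
  refine sum_congr rfl fun i _ => ?_
  rw [periodCount_tauGrid_mul_gridPerm]
  split_ifs with hdvd
  · obtain ⟨c, rfl⟩ := hdvd
    obtain ⟨hd, hc⟩ := CanonicallyOrderedAdd.mul_pos.1 (Nat.lt_of_succ_le hR)
    rw [Nat.mul_div_cancel_left c hd, periodCount_eq_mul_cycleCount _ hc, mul_assoc]
  · rfl
end

section
/- In the setting of the previous statement: an element (i,j,1) ∈ T lies in an r-cycle of τ∘h if and only if d_i divides r and j lies in an (r/d_i)-cycle of m_i(h) ∈ S_{r_i}. -/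
lemma sigma_apply {r d : ℕ} (h : Fin d → Equiv.Perm (Fin r)) (p : Fin r × Fin d) :
    (tauGrid r d * gridPerm r d h) p = (h p.2 p.1, finRotate d p.2) := rfl

lemma aux_iter {r d : ℕ} (hd : 0 < d) (h : Fin d → Equiv.Perm (Fin r)) (x : Fin r) :
    ∀ m, m ≤ d → ((tauGrid r d * gridPerm r d h) ^ m) (x, ⟨0, hd⟩) =
      ((((List.ofFn h).take m).reverse.prod) x, ⟨m % d, Nat.mod_lt _ hd⟩) := by
  intro m
  induction m with
  | zero => intro _; simp [Nat.zero_mod]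
  | succ m ih =>
    intro hm
    have hmd : m < d := hm
    rw [pow_succ', Equiv.Perm.mul_apply, ih (le_of_lt hmd), sigma_apply]
    have h1 : (List.ofFn h).take (m+1) = (List.ofFn h).take m ++ [h ⟨m, hmd⟩] := by
      rw [List.take_succ]
      simp [List.getElem?_ofFn, hmd]
    rw [h1]
    simp only [List.reverse_append, List.reverse_singleton, List.singleton_append,
      List.prod_cons, Equiv.Perm.mul_apply]
    congr 1
    · congr 1
      ext
      simp [Nat.mod_eq_of_lt hmd]
    · rcases d with _ | d
      · omega
      ext
      simp [finRotate_succ_apply, Fin.add_def, Nat.add_mod]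


lemma perm_ppt {α : Type*} (p : Equiv.Perm α) (m : ℕ) (x : α) :
    Function.IsPeriodicPt (⇑p) m x ↔ (p ^ m) x = x := Iff.rfl

lemma sigma_pow_d {r d : ℕ} (hd : 0 < d) (h : Fin d → Equiv.Perm (Fin r)) (x : Fin r) :
    ((tauGrid r d * gridPerm r d h) ^ d) (x, ⟨0, hd⟩) = (mComp h x, ⟨0, hd⟩) := by
  rw [aux_iter hd h x d le_rfl]
  rw [List.take_of_length_le (by simp)]
  simp [mComp, Nat.mod_self]

lemma sigma_pow_mul {r d : ℕ} (hd : 0 < d) (h : Fin d → Equiv.Perm (Fin r)) (x : Fin r)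
    (t : ℕ) : ((tauGrid r d * gridPerm r d h) ^ (d * t)) (x, ⟨0, hd⟩) =
      ((mComp h ^ t) x, ⟨0, hd⟩) := by
  induction t with
  | zero => simp
  | succ t ih =>
    rw [Nat.mul_succ, show d * t + d = d + d * t by ring, pow_add, Equiv.Perm.mul_apply,
      ih, sigma_pow_d hd h, pow_succ', Equiv.Perm.mul_apply]

lemma period_iff {r d : ℕ} (hd : 0 < d) (h : Fin d → Equiv.Perm (Fin r)) (j : Fin r)
    (m : ℕ) : Function.IsPeriodicPt (⇑(tauGrid r d * gridPerm r d h)) m (j, ⟨0, hd⟩) ↔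
      d ∣ m ∧ Function.IsPeriodicPt (⇑(mComp h)) (m / d) j := by
  rw [perm_ppt]
  constructor
  · intro hp'
    obtain ⟨t, s, hs, rfl⟩ : ∃ t s, s < d ∧ m = d * t + s :=
      ⟨m / d, m % d, Nat.mod_lt _ hd, (Nat.div_add_mod m d).symm⟩
    rw [show d * t + s = s + d * t by ring, pow_add, Equiv.Perm.mul_apply,
      sigma_pow_mul hd h j t, aux_iter hd h _ s (le_of_lt hs)] at hp'
    have hs0 : s % d = 0 := congrArg Fin.val (congrArg Prod.snd hp')
    have hs0' : s = 0 := by rwa [Nat.mod_eq_of_lt hs] at hs0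
    subst hs0'
    refine ⟨⟨t, by ring⟩, ?_⟩
    rw [show d * t + 0 = d * t by ring, Nat.mul_div_cancel_left _ hd, perm_ppt]
    have h1 := congrArg Prod.fst hp'
    simpa using h1
  · rintro ⟨⟨t, rfl⟩, hp⟩
    rw [Nat.mul_div_cancel_left _ hd, perm_ppt] at hp
    rw [sigma_pow_mul hd h j t, hp]

lemma grid_minimalPeriod {r d : ℕ} (hd : 0 < d) (h : Fin d → Equiv.Perm (Fin r))
    (j : Fin r) : Function.minimalPeriod (⇑(tauGrid r d * gridPerm r d h)) (j, ⟨0, hd⟩) =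
      d * Function.minimalPeriod (⇑(mComp h)) j := by
  set M := Function.minimalPeriod (⇑(tauGrid r d * gridPerm r d h)) (j, ⟨0, hd⟩) with hM
  set M' := Function.minimalPeriod (⇑(mComp h)) j with hM'
  have hppt : Function.IsPeriodicPt (⇑(mComp h)) M' j := Function.isPeriodicPt_minimalPeriod _ _
  have hppt2 : Function.IsPeriodicPt (⇑(tauGrid r d * gridPerm r d h)) M (j, ⟨0, hd⟩) :=
    Function.isPeriodicPt_minimalPeriod _ _
  -- M ∣ d * M'
  have h1 : M ∣ d * M' := by
    apply Function.IsPeriodicPt.minimalPeriod_dvd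
    rw [period_iff hd h j, Nat.mul_div_cancel_left _ hd]
    exact ⟨⟨M', rfl⟩, hppt⟩
  -- d * M' ∣ M
  have h2 : d * M' ∣ M := by
    rw [period_iff hd h j] at hppt2
    obtain ⟨hdM, hpM⟩ := hppt2
    have h3 : M' ∣ M / d := hpM.minimalPeriod_dvd
    obtain ⟨c, hc⟩ := h3
    exact ⟨c, by rw [mul_assoc, ← hc, Nat.mul_div_cancel' hdM]⟩
  exact Nat.dvd_antisymm h1 h2

lemma sigmaCongrRight_iterate {ι : Type*} {β : ι → Type*} (F : ∀ i, Equiv.Perm (β i))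
    (m : ℕ) (i : ι) (x : β i) :
    (⇑(Equiv.sigmaCongrRight F))^[m] ⟨i, x⟩ = ⟨i, (⇑(F i))^[m] x⟩ := by
  induction m with
  | zero => rfl
  | succ m ih => rw [Function.iterate_succ_apply', ih, Function.iterate_succ_apply']; rfl

lemma sigmaCongrRight_minimalPeriod {ι : Type*} {β : ι → Type*} (F : ∀ i, Equiv.Perm (β i))
    (i : ι) (x : β i) :
    Function.minimalPeriod (⇑(Equiv.sigmaCongrRight F)) ⟨i, x⟩ =
      Function.minimalPeriod (⇑(F i)) x := by
  have key : ∀ m, Function.IsPeriodicPt (⇑(Equiv.sigmaCongrRight F)) m ⟨i, x⟩ ↔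
      Function.IsPeriodicPt (⇑(F i)) m x := by
    intro m
    unfold Function.IsPeriodicPt Function.IsFixedPt
    rw [sigmaCongrRight_iterate]
    simp
  apply Nat.dvd_antisymm
  · exact Function.IsPeriodicPt.minimalPeriod_dvd
      ((key _).mpr (Function.isPeriodicPt_minimalPeriod _ _))
  · exact Function.IsPeriodicPt.minimalPeriod_dvd
      ((key _).mp (Function.isPeriodicPt_minimalPeriod _ _))


/-- An element `(i,j,1)` (first column) lies in an `R`-cycle of `τ∘h` iff `dᵢ ∣ R` and
`j` lies in an `(R/dᵢ)`-cycle of `mᵢ(h)`.  "Lying in an `R`-cycle" is expressed by the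
minimal period of the point under the permutation. -/
theorem stmt7 (n : ℕ) (r d : Fin n → ℕ) (h : BigH n r d) (R : ℕ) (hR : 1 ≤ R)
    (i : Fin n) (j : Fin (r i)) (k₀ : Fin (d i)) (hk₀ : (k₀ : ℕ) = 0) :
    Function.minimalPeriod (⇑(tauBig n r d * hPermBig h)) ⟨i, (j, k₀)⟩ = R ↔
      d i ∣ R ∧ Function.minimalPeriod (⇑(mComp (h i))) j = R / d i := by
  have hd : 0 < d i := k₀.pos
  have hk : k₀ = ⟨0, hd⟩ := Fin.ext hk₀
  subst hk
  have hmul : tauBig n r d * hPermBig h =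
      Equiv.sigmaCongrRight (fun i => tauGrid (r i) (d i) * gridPerm (r i) (d i) (h i)) :=
    rfl
  rw [hmul, sigmaCongrRight_minimalPeriod, grid_minimalPeriod hd]
  constructor
  · rintro rfl
    exact ⟨dvd_mul_right _ _, (Nat.mul_div_cancel_left _ hd).symm⟩
  · rintro ⟨hdvd, hM⟩
    rw [hM, Nat.mul_div_cancel' hdvd]
end
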